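/- If a locally integrable function s : [1, ∞) → ℂ is Cesàro summable (C,1) to A ∈ ℂ, i.e. (1/t) ∫₁ᵗ s(u) du → A as t → ∞, then s is also summable (L,1) to A, i.e. (1/log t) ∫₁ᵗ s(u)/u du → A as t → ∞. -/

import Mathlib

/-!
Writing `S(t) = ∫₁ᵗ s`, Fubini on the triangle `1 < u ≤ v ≤ t` together with
`u⁻¹ - t⁻¹ = ∫ᵤᵗ v⁻² dv` gives `∫₁ᵗ s(u)/u du = S(t)/t + ∫₁ᵗ (S(v)/v)/v dv`. After dividing by
`log t`, the first term tends to `0` and the second is the logarithmic average of the Cesàro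
means `S(v)/v`, which converges to the same limit `A` as they do.
-/

open Filter MeasureTheory Set
open scoped Topology

noncomputable section

-- the (C,1) and (L,1) means of `s` at time `t`
def cesaroMean (s : ℝ → ℂ) (t : ℝ) : ℂ := (t : ℂ)⁻¹ * ∫ u in Ioc 1 t, s u

def logMean (s : ℝ → ℂ) (t : ℝ) : ℂ := (Real.log t : ℂ)⁻¹ * ∫ u in Ioc 1 t, s u / u

end

theorem MeasureTheory.IntegrableOn.div_ofReal_Icc {g : ℝ → ℂ} {a b : ℝ} (ha : 0 < a)
    (hg : IntegrableOn g (Icc a b)) : IntegrableOn (fun v => g v / v) (Icc a b) := by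
  simp_rw [div_eq_mul_inv]
  refine hg.mul_continuousOn ?_ isCompact_Icc
  exact (Complex.continuous_ofReal.continuousOn).inv₀ fun v hv =>
    Complex.ofReal_ne_zero.mpr (ha.trans_le hv.1).ne'

theorem integral_Ioc_one_inv {t : ℝ} (ht : 1 ≤ t) :
    ∫ v in Ioc 1 t, (v : ℂ)⁻¹ = Real.log t := by
  simp_rw [← Complex.ofReal_inv]
  rw [integral_complex_ofReal, ← intervalIntegral.integral_of_le ht,
    integral_inv_of_pos one_pos (one_pos.trans_le ht), div_one]

theorem integral_Icc_inv_sq {u t : ℝ} (hu : 0 < u) (hut : u ≤ t) :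
    ∫ v in Icc u t, (v ^ 2)⁻¹ = u⁻¹ - t⁻¹ := by
  have hpos : ∀ v ∈ uIcc u t, 0 < v := fun v hv =>
    hu.trans_le (by rw [uIcc_of_le hut] at hv; exact hv.1)
  rw [integral_Icc_eq_integral_Ioc, ← intervalIntegral.integral_of_le hut,
    intervalIntegral.integral_eq_sub_of_hasDerivAt (f := fun v => -v⁻¹)]
  · ring
  · intro v hv
    exact (hasDerivAt_inv (hpos v hv).ne').neg.congr_deriv (neg_neg _)
  · exact (continuousOn_id.pow 2).inv₀ (fun v hv => (pow_pos (hpos v hv) 2).ne')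
      |>.intervalIntegrable

theorem norm_integral_Ioc_div_le {g : ℝ → ℂ} {ε T t : ℝ} (hT : 0 < T) (hTt : T ≤ t)
    (hg : ∀ v ∈ Ioc T t, ‖g v‖ ≤ ε) :
    ‖∫ v in Ioc T t, g v / v‖ ≤ ε * Real.log (t / T) := by
  have hpos : ∀ v ∈ Icc T t, 0 < v := fun v hv => hT.trans_le hv.1
  have hbound : IntegrableOn (fun v => ε * v⁻¹) (Ioc T t) :=
    (continuousOn_const.mul (continuousOn_id.inv₀ fun v hv => (hpos v hv).ne')
      |>.integrableOn_Icc).mono_set Ioc_subset_Icc_self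
  calc ‖∫ v in Ioc T t, g v / v‖ ≤ ∫ v in Ioc T t, ε * v⁻¹ := by
        refine norm_integral_le_of_norm_le hbound ?_
        filter_upwards [ae_restrict_mem measurableSet_Ioc] with v hv
        have hv0 : 0 < v := hT.trans hv.1
        rw [norm_div, Complex.norm_real, Real.norm_of_nonneg hv0.le, div_eq_mul_inv]
        exact mul_le_mul_of_nonneg_right (hg v hv) (inv_nonneg.mpr hv0.le)
    _ = ε * Real.log (t / T) := by
        rw [← intervalIntegral.integral_of_le hTt, intervalIntegral.integral_const_mul,
          integral_inv_of_pos hT (hT.trans_le hTt)]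

theorem tendsto_logMean_of_tendsto_zero {g : ℝ → ℂ} (hg : Tendsto g atTop (𝓝 0))
    (hint : ∀ t, IntegrableOn g (Icc 1 t)) : Tendsto (logMean g) atTop (𝓝 0) := by
  rw [NormedAddGroup.tendsto_nhds_zero]
  intro ε hε
  obtain ⟨T, hT⟩ := eventually_atTop.mp
    ((tendsto_zero_iff_norm_tendsto_zero.mp hg).eventually (ge_mem_nhds (half_pos hε)))
  set T₁ := max T 1
  set C := ‖∫ v in Ioc 1 T₁, g v / v‖
  filter_upwards [eventually_ge_atTop T₁,
    Real.tendsto_log_atTop.eventually_gt_atTop (2 * C / ε)] with t htT hlog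
  have hT₁ : 1 ≤ T₁ := le_max_right T 1
  have hlog_pos : 0 < Real.log t := (by positivity : 0 ≤ 2 * C / ε).trans_lt hlog
  have hC : C < ε / 2 * Real.log t := by
    rw [div_lt_iff₀ hε] at hlog
    linarith
  have hsplit : ∫ v in Ioc 1 t, g v / v =
      (∫ v in Ioc 1 T₁, g v / v) + ∫ v in Ioc T₁ t, g v / v := by
    have hint' := (hint t).div_ofReal_Icc one_pos
    rw [← setIntegral_union (Ioc_disjoint_Ioc_of_le le_rfl) measurableSet_Ioc
      (hint'.mono_set (Ioc_subset_Icc_self.trans (Icc_subset_Icc_right htT)))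
      (hint'.mono_set (Ioc_subset_Icc_self.trans (Icc_subset_Icc_left hT₁))),
      Ioc_union_Ioc_eq_Ioc hT₁ htT]
  have htail : ‖∫ v in Ioc T₁ t, g v / v‖ ≤ ε / 2 * Real.log t := by
    refine (norm_integral_Ioc_div_le (one_pos.trans_le hT₁) htT
      fun v hv => hT v ((le_max_left T 1).trans hv.1.le)).trans ?_
    rw [Real.log_div (by linarith) (by linarith)]
    have := Real.log_nonneg hT₁
    nlinarith
  calc ‖logMean g t‖ = (Real.log t)⁻¹ * ‖∫ v in Ioc 1 t, g v / v‖ := by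
        rw [logMean, norm_mul, norm_inv, Complex.norm_real, Real.norm_of_nonneg hlog_pos.le]
    _ ≤ (Real.log t)⁻¹ * (C + ε / 2 * Real.log t) := by
        rw [hsplit]
        gcongr
        exact (norm_add_le _ _).trans (add_le_add le_rfl htail)
    _ < (Real.log t)⁻¹ * (ε / 2 * Real.log t + ε / 2 * Real.log t) := by gcongr
    _ = ε := by field_simp; ring

theorem logMean_sub_const {h : ℝ → ℂ} {t : ℝ} (A : ℂ) (hh : IntegrableOn h (Icc 1 t))
    (ht : 1 < t) :
    logMean (fun v => h v - A) t = logMean h t - A := by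
  have hlog : (Real.log t : ℂ) ≠ 0 := Complex.ofReal_ne_zero.mpr (Real.log_pos ht).ne'
  have hA : ∫ v in Ioc 1 t, A / v = A * Real.log t := by
    simp_rw [div_eq_mul_inv]
    rw [integral_const_mul, integral_Ioc_one_inv ht.le]
  have hA_int : IntegrableOn (fun v : ℝ => A / v) (Ioc 1 t) :=
    (continuousOn_const.integrableOn_Icc.div_ofReal_Icc one_pos).mono_set Ioc_subset_Icc_self
  simp_rw [logMean, sub_div]
  rw [integral_sub ((hh.div_ofReal_Icc one_pos).mono_set Ioc_subset_Icc_self) hA_int, hA]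
  field_simp

theorem tendsto_logMean_of_tendsto {h : ℝ → ℂ} {A : ℂ} (hA : Tendsto h atTop (𝓝 A))
    (hint : ∀ t, IntegrableOn h (Icc 1 t)) : Tendsto (logMean h) atTop (𝓝 A) := by
  have h0 := tendsto_logMean_of_tendsto_zero (tendsto_sub_nhds_zero_iff.mpr hA)
    fun t => (hint t).sub continuousOn_const.integrableOn_Icc
  refine tendsto_sub_nhds_zero_iff.mp (h0.congr' ?_)
  filter_upwards [eventually_gt_atTop 1] with t ht
  exact logMean_sub_const A (hint t) ht

theorem integral_div_eq_cesaroMean_add {s : ℝ → ℂ} {t : ℝ} (hs : IntegrableOn s (Icc 1 t)) :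
    ∫ u in Ioc 1 t, s u / u = cesaroMean s t + ∫ v in Ioc 1 t, cesaroMean s v / v := by
  set μ := volume.restrict (Ioc (1 : ℝ) t)
  set F : ℝ → ℝ → ℂ := fun u v =>
    {p : ℝ × ℝ | p.1 ≤ p.2}.indicator (fun p => s p.1 * ((p.2 ^ 2)⁻¹ : ℝ)) (u, v)
  have hs' : IntegrableOn s (Ioc 1 t) := hs.mono_set Ioc_subset_Icc_self
  have hw : IntegrableOn (fun v : ℝ => (((v ^ 2)⁻¹ : ℝ) : ℂ)) (Ioc 1 t) :=
    ((Complex.continuous_ofReal.comp_continuousOn ((continuousOn_id.pow 2).inv₀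
      fun v hv => (pow_pos (one_pos.trans_le hv.1) 2).ne')).integrableOn_Icc).mono_set
      Ioc_subset_Icc_self
  have hF : Integrable (Function.uncurry F) (μ.prod μ) :=
    (hs'.mul_prod hw).indicator (measurableSet_le measurable_fst measurable_snd)
  have inner_v : ∀ u ∈ Ioc (1 : ℝ) t, ∫ v, F u v ∂μ = s u / u - s u * (t : ℂ)⁻¹ := by
    intro u hu
    have hFu : (fun v => F u v) = (Ici u).indicator fun v => s u * ((v ^ 2)⁻¹ : ℝ) := by
      ext v; simp only [F, indicator_apply, mem_ofPred_eq, mem_Ici]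
    have hset : Ici u ∩ Ioc 1 t = Icc u t := by
      ext v
      simp only [mem_inter_iff, mem_Ici, mem_Ioc, mem_Icc]
      exact ⟨fun h => ⟨h.1, h.2.2⟩, fun h => ⟨h.1, hu.1.trans_le h.1, h.2⟩⟩
    rw [hFu, integral_indicator measurableSet_Ici, Measure.restrict_restrict measurableSet_Ici,
      hset, integral_const_mul, integral_complex_ofReal,
      integral_Icc_inv_sq (one_pos.trans hu.1) hu.2]
    push_cast
    ring
  have inner_u : ∀ v ∈ Ioc (1 : ℝ) t, ∫ u, F u v ∂μ = cesaroMean s v / v := by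
    intro v hv
    have hFv : (fun u => F u v) = (Iic v).indicator fun u => s u * ((v ^ 2)⁻¹ : ℝ) := by
      ext u; simp only [F, indicator_apply, mem_ofPred_eq, mem_Iic]
    have hset : Iic v ∩ Ioc 1 t = Ioc 1 v := by
      ext u
      simp only [mem_inter_iff, mem_Iic, mem_Ioc]
      exact ⟨fun h => ⟨h.2.1, h.1⟩, fun h => ⟨h.2, h.1, h.2.trans hv.2⟩⟩
    rw [hFv, integral_indicator measurableSet_Iic, Measure.restrict_restrict measurableSet_Iic,
      hset, integral_mul_const, cesaroMean]
    push_cast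
    ring
  have swap := integral_integral_swap hF
  rw [setIntegral_congr_fun measurableSet_Ioc inner_v,
    setIntegral_congr_fun measurableSet_Ioc inner_u,
    integral_sub ((hs.div_ofReal_Icc one_pos).mono_set Ioc_subset_Icc_self) (hs'.mul_const _),
    integral_mul_const] at swap
  rw [← swap, cesaroMean]
  ring

theorem continuousOn_cesaroMean {s : ℝ → ℂ} {t : ℝ} (hs : IntegrableOn s (Icc 1 t)) :
    ContinuousOn (cesaroMean s) (Icc 1 t) := by
  rcases lt_or_ge t 1 with ht | ht
  · simp [Icc_eq_empty_of_lt ht]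
  have hprim : ContinuousOn (fun v => ∫ u in (1 : ℝ)..v, s u) (Icc 1 t) := by
    simpa [uIcc_of_le ht] using
      intervalIntegral.continuousOn_primitive_interval (a := 1) (b := t) (by rwa [uIcc_of_le ht])
  refine ((Complex.continuous_ofReal.continuousOn.inv₀ fun v hv =>
    Complex.ofReal_ne_zero.mpr (one_pos.trans_le hv.1).ne').mul hprim).congr fun v hv => ?_
  change _ = (v : ℂ)⁻¹ * ∫ u in (1 : ℝ)..v, s u
  rw [cesaroMean, intervalIntegral.integral_of_le hv.1]

theorem cesaro_implies_logarithmic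
    (s : ℝ → ℂ) (hs : ∀ t : ℝ, IntegrableOn s (Icc 1 t)) (A : ℂ)
    (hC1 : Tendsto (fun t : ℝ => ((t : ℂ))⁻¹ * ∫ u in Ioc (1:ℝ) t, s u)
      atTop (nhds A)) :
    Tendsto (fun t : ℝ => ((Real.log t : ℂ))⁻¹ * ∫ u in Ioc (1:ℝ) t, s u / (u : ℂ))
      atTop (nhds A) := by
  change Tendsto (cesaroMean s) atTop (𝓝 A) at hC1
  change Tendsto (logMean s) atTop (𝓝 A)
  have hlog_inv : Tendsto (fun t : ℝ => ((Real.log t : ℂ))⁻¹) atTop (𝓝 0) := by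
    simpa [Function.comp_def] using (Complex.continuous_ofReal.tendsto 0).comp
      (tendsto_inv_atTop_zero.comp Real.tendsto_log_atTop)
  have hdecomp : logMean s =
      fun t => (Real.log t : ℂ)⁻¹ * cesaroMean s t + logMean (cesaroMean s) t := by
    ext t
    rw [logMean, integral_div_eq_cesaroMean_add (hs t), mul_add, logMean]
  rw [hdecomp]
  simpa using (hlog_inv.mul hC1).add
    (tendsto_logMean_of_tendsto hC1 fun t => (continuousOn_cesaroMean (hs t)).integrableOn_Icc)
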